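/- (Theorem 1, fixed-point case, derivatives with respect to A.) Let (z_t)_{t\ge 1} be an orbit of F, i.e. z_{t+1} = F(z_t), and assume z_t converges to a fixed point z^* of F with z^*_i \ne 0 for all i, and that \|W_\Omega(z^*)\|_2 < 1. Fix m \in \{1,\dots,M\}, let e_m denote the m-th standard basis vector, and define the derivative sequence (G_t)_{t\ge 1} (which equals \partial z_t / \partial A_{mm}) by G_1 = 0 and G_{t+1} = (z_t)_m\, e_m + W_\Omega(z_t)\, G_t. Then \sup_t \|G_t\| < \infty. -/

import Mathlib

open Matrix Filter Topology

/-- The operator 2-norm (largest singular value) of a real matrix. -/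
noncomputable def opNorm2 {m n : Type*} [Fintype m] [Fintype n] [DecidableEq n]
    (A : Matrix m n ℝ) : ℝ :=
  ‖LinearMap.toContinuousLinearMap (Matrix.toEuclideanLin (𝕜 := ℝ) A)‖

/-- Euclidean norm of a real vector. -/
noncomputable def vnorm {n : Type*} [Fintype n] (v : n → ℝ) : ℝ :=
  Real.sqrt (∑ i, v i ^ 2)

/-- Componentwise ReLU. -/
noncomputable def relu {n : Type*} (z : n → ℝ) : n → ℝ := fun i => max 0 (z i)

/-- `Dmat z` is the diagonal 0–1 matrix with `(Dmat z) i i = 1` iff `z i > 0`. -/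
noncomputable def Dmat {n : Type*} [Fintype n] [DecidableEq n] (z : n → ℝ) :
    Matrix n n ℝ :=
  Matrix.diagonal (fun i => if 0 < z i then (1 : ℝ) else 0)

/-- `W_Ω(z) = A + W D(z)`. -/
noncomputable def Wom {n : Type*} [Fintype n] [DecidableEq n]
    (A W : Matrix n n ℝ) (z : n → ℝ) : Matrix n n ℝ :=
  A + W * Dmat z

/-- The deterministic, input-free PLRNN map `F(z) = A z + W φ(z) + h`. -/
noncomputable def plrnn {n : Type*} [Fintype n] [DecidableEq n]
    (A W : Matrix n n ℝ) (h : n → ℝ) (z : n → ℝ) : n → ℝ :=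
  A.mulVec z + W.mulVec (relu z) + h

/-!
Since `z t → z*` and no coordinate of `z*` vanishes, the sign pattern `D(z t)` eventually equals
`D(z*)`, so from then on the recursion reads `G (t+1) = (z t)_m e_m + W_Ω(z*) G t`: a contraction
of norm `q < 1` plus a bounded forcing term. Hence eventually `‖G (t+1)‖ ≤ c + q ‖G t‖`, and such
a sequence stays below `max (‖G T‖, c / (1 - q))`.
-/

section EuclideanNorm

variable {n : Type*} [Fintype n]

lemma vnorm_eq_norm (v : n → ℝ) : vnorm v = ‖(WithLp.toLp 2 v : EuclideanSpace ℝ n)‖ := by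
  simp [vnorm, EuclideanSpace.norm_eq, Real.norm_eq_abs, sq_abs]

lemma vnorm_add_le (u v : n → ℝ) : vnorm (u + v) ≤ vnorm u + vnorm v := by
  simpa only [vnorm_eq_norm, WithLp.toLp_add] using norm_add_le _ _

lemma opNorm2_nonneg {m : Type*} [Fintype m] [DecidableEq n] (B : Matrix m n ℝ) :
    0 ≤ opNorm2 B :=
  norm_nonneg _

lemma vnorm_mulVec_le {m : Type*} [Fintype m] [DecidableEq n] (B : Matrix m n ℝ) (v : n → ℝ) :
    vnorm (B *ᵥ v) ≤ opNorm2 B * vnorm v := by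
  simpa [vnorm_eq_norm, opNorm2] using
    (LinearMap.toContinuousLinearMap (Matrix.toEuclideanLin (𝕜 := ℝ) B)).le_opNorm
      (WithLp.toLp 2 v)

lemma vnorm_smul_single [DecidableEq n] (a : ℝ) (m : n) :
    vnorm (a • (Pi.single m 1 : n → ℝ)) = |a| := by
  have hsq : ∀ i, (a • (Pi.single m 1 : n → ℝ)) i ^ 2 = if i = m then a ^ 2 else 0 := by
    intro i
    by_cases hi : i = m <;> simp [hi]
  simp only [vnorm, hsq, Finset.sum_ite_eq', Finset.mem_univ, if_true, Real.sqrt_sq_eq_abs]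

lemma vnorm_smul_single_add_mulVec_le [DecidableEq n] (a : ℝ) (m : n) (B : Matrix n n ℝ)
    (v : n → ℝ) : vnorm (a • (Pi.single m 1 : n → ℝ) + B *ᵥ v) ≤ |a| + opNorm2 B * vnorm v :=
  (vnorm_add_le _ _).trans (by rw [vnorm_smul_single]; gcongr; exact vnorm_mulVec_le B v)

end EuclideanNorm

lemma bddAbove_range_of_eventually_le_affine {u : ℕ → ℝ} {c q : ℝ} (hq0 : 0 ≤ q) (hq1 : q < 1)
    (hstep : ∀ᶠ t in atTop, u (t + 1) ≤ c + q * u t) : BddAbove (Set.range u) := by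
  obtain ⟨T, hT⟩ := eventually_atTop.mp hstep
  set D := max (u T) (c / (1 - q))
  have hD_invariant : c + q * D ≤ D := by
    have : c ≤ D * (1 - q) := (div_le_iff₀ (by linarith)).mp (le_max_right _ _)
    linarith
  have hle : ∀ t, T ≤ t → u t ≤ D :=
    Nat.le_induction (le_max_left _ _) fun t ht ih =>
      (hT t ht).trans (le_trans (by gcongr) hD_invariant)
  exact IsBoundedUnder.bddAbove_range
    (isBoundedUnder_of_eventually_le (eventually_atTop.mpr ⟨T, hle⟩))

section SignPattern

variable {ι n : Type*} [Fintype n] [DecidableEq n] {l : Filter ι} {z : ι → n → ℝ} {zstar : n → ℝ}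

lemma eventually_Dmat_eq (hz : Tendsto z l (𝓝 zstar)) (hnz : ∀ i, zstar i ≠ 0) :
    ∀ᶠ t in l, Dmat (z t) = Dmat zstar := by
  have hsign : ∀ i, ∀ᶠ x in 𝓝 (zstar i), (0 < x ↔ 0 < zstar i) := by
    intro i
    rcases (hnz i).lt_or_gt with hneg | hpos
    · filter_upwards [eventually_lt_nhds hneg] with x hx
      exact iff_of_false hx.not_gt hneg.not_gt
    · filter_upwards [eventually_gt_nhds hpos] with x hx
      exact iff_of_true hx hpos
  filter_upwards [eventually_all.mpr fun i => (tendsto_pi_nhds.mp hz i).eventually (hsign i)]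
    with t ht
  simp only [Dmat, ht]

lemma eventually_Wom_eq (A W : Matrix n n ℝ) (hz : Tendsto z l (𝓝 zstar))
    (hnz : ∀ i, zstar i ≠ 0) : ∀ᶠ t in l, Wom A W (z t) = Wom A W zstar :=
  (eventually_Dmat_eq hz hnz).mono fun t ht => by rw [Wom, Wom, ht]

end SignPattern

theorem gradients_wrt_A_bounded_general {M : ℕ} (A W : Matrix (Fin M) (Fin M) ℝ)
    (z : ℕ → Fin M → ℝ)
    (zstar : Fin M → ℝ)
    (hconv : Tendsto z atTop (𝓝 zstar)) (hnz : ∀ i, zstar i ≠ 0)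
    (hnorm : opNorm2 (Wom A W zstar) < 1)
    (m : Fin M) (G : ℕ → Fin M → ℝ)
    (hGrec : ∀ t, 1 ≤ t →
      G (t + 1) = z t m • (Pi.single m 1 : Fin M → ℝ) + (Wom A W (z t)).mulVec (G t)) :
    ∃ C : ℝ, ∀ t, vnorm (G t) ≤ C := by
  have hzm_bound : ∀ᶠ t in atTop, |z t m| ≤ |zstar m| + 1 :=
    (tendsto_pi_nhds.mp hconv m).abs.eventually (eventually_le_nhds (lt_add_one _))
  have hstep : ∀ᶠ t in atTop,
      vnorm (G (t + 1)) ≤ (|zstar m| + 1) + opNorm2 (Wom A W zstar) * vnorm (G t) := by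
    filter_upwards [eventually_ge_atTop 1, eventually_Wom_eq A W hconv hnz, hzm_bound]
      with t ht hW hzm
    rw [hGrec t ht, hW]
    exact (vnorm_smul_single_add_mulVec_le _ _ _ _).trans (by gcongr)
  obtain ⟨C, hC⟩ := bddAbove_range_of_eventually_le_affine (u := fun t => vnorm (G t))
    (opNorm2_nonneg _) hnorm hstep
  exact ⟨C, fun t => hC ⟨t, rfl⟩⟩

/-- Theorem 1, fixed-point case, derivatives w.r.t. `A`: along an orbit
converging to a stable fixed point `z*` with no zero component and `‖W_Ω(z*)‖₂ < 1`, the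
derivative sequence `G` of the states w.r.t. the diagonal entry `A m m` (satisfying
`G 1 = 0` and `G (t+1) = (z t)_m e_m + W_Ω(z t) G t`) is bounded in norm. -/
theorem gradients_wrt_A_bounded {M : ℕ} (A W : Matrix (Fin M) (Fin M) ℝ)
    (hA : A.IsDiag) (hWd : ∀ i, W i i = 0) (h : Fin M → ℝ)
    (z : ℕ → Fin M → ℝ) (horb : ∀ t, 1 ≤ t → z (t + 1) = plrnn A W h (z t))
    (zstar : Fin M → ℝ) (hfix : plrnn A W h zstar = zstar)
    (hconv : Tendsto z atTop (𝓝 zstar)) (hnz : ∀ i, zstar i ≠ 0)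
    (hnorm : opNorm2 (Wom A W zstar) < 1)
    (m : Fin M) (G : ℕ → Fin M → ℝ) (hG1 : G 1 = 0)
    (hGrec : ∀ t, 1 ≤ t →
      G (t + 1) = z t m • (Pi.single m 1 : Fin M → ℝ) + (Wom A W (z t)).mulVec (G t)) :
    ∃ C : ℝ, ∀ t, vnorm (G t) ≤ C :=
  gradients_wrt_A_bounded_general A W z zstar hconv hnz hnorm m G hGrec
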